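/- If 0 < p < 1/2 − 1/(2α_k), then g has exactly three zeros in [0,1]: one β₁ ∈ (0,1/2), the point 1/2, and β₂ = 1 − β₁ ∈ (1/2,1). -/

import Mathlib

open Finset

/-- `P{Bin(k,x) ≥ (k+1)/2}`: the upper tail of a binomial random variable
with `k` trials and success probability `x`. -/
noncomputable def binTail (k : ℕ) (x : ℝ) : ℝ :=
  ∑ i ∈ Finset.Icc ((k + 1) / 2) k, (k.choose i : ℝ) * x ^ i * (1 - x) ^ (k - i)

/-- `α_k = (1/2^{k-2}) · Σ_{k/2 < i ≤ k} C(k,i)·(i − k/2)` -/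
noncomputable def alpha (k : ℕ) : ℝ :=
  (1 / 2 ^ (k - 2) : ℝ) *
    ∑ i ∈ (Finset.range (k + 1)).filter (fun i => k < 2 * i),
      (k.choose i : ℝ) * ((i : ℝ) - (k : ℝ) / 2)

lemma telescope (u : ℕ → ℝ) (m k : ℕ) (h : m ≤ k) :
    ∑ i ∈ Icc m k, (u i - u (i+1)) = u m - u (k+1) := by
  rw [← Finset.Ico_add_one_right_eq_Icc, Finset.sum_Ico_eq_sum_range]
  have := Finset.sum_range_sub' (fun i => u (m + i)) (k + 1 - m)
  simp only [← add_assoc] at this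
  rw [this, add_zero,
    show m + (k + 1 - m) = k + 1 by omega]

lemma choose_id (j i : ℕ) (h1 : 1 ≤ i) (h2 : i ≤ 2*j+1) :
    ((2*j+1).choose i : ℝ) * (2*i - (2*j+1)) =
      (((2*j+1) * (2*j).choose (i-1) : ℕ) : ℝ) - (((2*j+1) * (2*j).choose i : ℕ) : ℝ) := by
  have e1 : (2*j+1) * (2*j).choose (i-1) = (2*j+1).choose i * i := by
    have := Nat.add_one_mul_choose_eq (2*j) (i-1)
    rwa [show i - 1 + 1 = i by omega] at this
  have e2 : (2*j+1) * (2*j).choose i = (2*j+1).choose i * (2*j+1 - i) := by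
    have h3 := Nat.add_one_mul_choose_eq (2*j) i
    have h4 := Nat.choose_succ_right_eq (2*j+1) i
    rw [h3, h4]
  rw [e1, e2]
  push_cast [Nat.cast_sub h2]
  ring

lemma alpha_eq (j : ℕ) (hj : 1 ≤ j) :
    alpha (2*j+1) = (((2*j+1) * (2*j).choose j : ℕ) : ℝ) / 2^(2*j) := by
  have hset : (Finset.range (2*j+1+1)).filter (fun i => 2*j+1 < 2*i) = Icc (j+1) (2*j+1) := by
    ext i; simp; omega
  have hsum : ∑ i ∈ Icc (j+1) (2*j+1), (((2*j+1).choose i : ℝ)) * ((i:ℝ) - ((2*j+1 : ℕ):ℝ)/2)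
      = (((2*j+1) * (2*j).choose j : ℕ) : ℝ) / 2 := by
    have ht := telescope (fun i => (((2*j+1) * (2*j).choose (i-1) : ℕ) : ℝ)) (j+1) (2*j+1)
      (by omega)
    have hc : ∀ i ∈ Icc (j+1) (2*j+1), (((2*j+1).choose i : ℝ)) * ((i:ℝ) - ((2*j+1 : ℕ):ℝ)/2)
        = ((((2*j+1) * (2*j).choose (i-1) : ℕ) : ℝ) - (((2*j+1) * (2*j).choose (i+1-1) : ℕ) : ℝ))/2 := by
      intro i hi
      simp only [mem_Icc] at hi
      rw [show i+1-1 = i from rfl, ← choose_id j i (by omega) (by omega)]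
      push_cast
      ring
    rw [Finset.sum_congr rfl hc, ← Finset.sum_div, ht,
      show j+1-1 = j from rfl, show 2*j+1+1-1 = 2*j+1 from rfl,
      Nat.choose_eq_zero_of_lt (show 2*j < 2*j+1 by omega)]
    push_cast
    ring
  rw [alpha, hset, hsum,
    show 2*j+1-2 = 2*j-1 by omega,
    show (2:ℝ)^(2*j) = 2^(2*j-1) * 2 by rw [← pow_succ]; congr 1; omega]
  field_simp

lemma binTail_symm (j : ℕ) (x : ℝ) :
    binTail (2*j+1) (1 - x) = 1 - binTail (2*j+1) x := by
  have hIcc : (2*j+1+1)/2 = j+1 := by omega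
  have htot : ∑ i ∈ range (2*j+1+1), ((2*j+1).choose i : ℝ) * x ^ i * (1-x) ^ (2*j+1-i) = 1 := by
    have h := add_pow x (1-x) (2*j+1)
    simp only [add_sub_cancel, one_pow] at h
    conv_rhs => rw [h]
    exact Finset.sum_congr rfl (fun i hi => by ring)
  have hsplit : range (2*j+1+1) = range (j+1) ∪ Icc (j+1) (2*j+1) := by
    ext i; simp only [Finset.mem_range, Finset.mem_union, Finset.mem_Icc]; omega
  have hdisj : Disjoint (range (j+1)) (Icc (j+1) (2*j+1)) := by
    rw [Finset.disjoint_left]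
    intro a ha hb
    simp only [mem_range] at ha
    simp only [mem_Icc] at hb
    omega
  have hre : binTail (2*j+1) (1-x)
      = ∑ i ∈ range (j+1), ((2*j+1).choose i : ℝ) * x ^ i * (1-x) ^ (2*j+1-i) := by
    rw [binTail, hIcc]
    rw [show (1 : ℝ) - (1 - x) = x by ring]
    apply Finset.sum_nbij' (fun i => 2*j+1-i) (fun i => 2*j+1-i)
    · intro i hi; simp only [mem_Icc] at hi; simp only [mem_range]; omega
    · intro i hi; simp only [mem_range] at hi; simp only [mem_Icc]; omega
    · intro i hi; simp only [mem_Icc] at hi; omega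
    · intro i hi; simp only [mem_range] at hi; omega
    · intro i hi
      simp only [mem_Icc] at hi
      rw [Nat.choose_symm (by omega), show 2*j+1-(2*j+1-i) = i by omega]
      ring
  have key : binTail (2*j+1) (1-x) + binTail (2*j+1) x = 1 := by
    rw [hre, binTail, hIcc, ← Finset.sum_union hdisj, ← hsplit, htot]
  linarith

lemma binTail_hasDerivAt (j : ℕ) (x : ℝ) :
    HasDerivAt (binTail (2*j+1))
      ((((2*j+1) * (2*j).choose j : ℕ) : ℝ) * (x*(1-x))^j) x := by
  have hIcc : (2*j+1+1)/2 = j+1 := by omega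
  have hfun : binTail (2*j+1) = fun y : ℝ =>
      ∑ i ∈ Icc (j+1) (2*j+1), ((2*j+1).choose i : ℝ) * y ^ i * (1 - y) ^ (2*j+1-i) := by
    funext y; rw [binTail, hIcc]
  set u : ℕ → ℝ := fun i => (((2*j+1) * (2*j).choose (i-1) : ℕ) : ℝ) * x^(i-1) * (1-x)^(2*j+1-i)
    with hu
  have hterm : ∀ i ∈ Icc (j+1) (2*j+1),
      HasDerivAt (fun y : ℝ => ((2*j+1).choose i : ℝ) * y ^ i * (1 - y) ^ (2*j+1-i))
        (u i - u (i+1)) x := by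
    intro i hi
    simp only [mem_Icc] at hi
    have h1 : HasDerivAt (fun y : ℝ => y^i) ((i:ℝ)*x^(i-1)) x := hasDerivAt_pow i x
    have hsub : HasDerivAt (fun y : ℝ => 1 - y) (-1) x := (hasDerivAt_id x).const_sub 1
    have h2 : HasDerivAt (fun y : ℝ => (1-y)^(2*j+1-i))
        ((((2*j+1-i : ℕ):ℝ) * (1-x)^(2*j+1-i-1)) * (-1)) x :=
      (hasDerivAt_pow (2*j+1-i) (1-x)).comp x hsub
    have h3 := (h1.mul h2).const_mul (((2*j+1).choose i : ℝ))
    have e1 : (2*j+1) * (2*j).choose (i-1) = (2*j+1).choose i * i := by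
      have := Nat.add_one_mul_choose_eq (2*j) (i-1)
      rwa [show i - 1 + 1 = i by omega] at this
    have e2 : (2*j+1) * (2*j).choose i = (2*j+1).choose i * (2*j+1 - i) := by
      have h3 := Nat.add_one_mul_choose_eq (2*j) i
      rw [h3, Nat.choose_succ_right_eq (2*j+1) i]
    have heq : ((2*j+1).choose i : ℝ) * (((i:ℝ)*x^(i-1)) * (1-x)^(2*j+1-i)
          + x^i * ((((2*j+1-i : ℕ):ℝ) * (1-x)^(2*j+1-i-1)) * (-1)))
        = u i - u (i+1) := by
      rw [hu]
      simp only
      rw [show i+1-1 = i from rfl, show 2*j+1-(i+1) = 2*j+1-i-1 by omega, e1, e2]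
      push_cast
      ring
    rw [← heq]
    have hfx : (fun y : ℝ => ((2*j+1).choose i : ℝ) * y ^ i * (1 - y) ^ (2*j+1-i))
        = fun y : ℝ => ((2*j+1).choose i : ℝ) * (y ^ i * (1 - y) ^ (2*j+1-i)) := by
      funext y; ring
    rw [hfx]
    exact h3
  have hsum := HasDerivAt.fun_sum hterm
  rw [telescope u (j+1) (2*j+1) (by omega)] at hsum
  have hval : u (j+1) - u (2*j+1+1) = (((2*j+1) * (2*j).choose j : ℕ) : ℝ) * (x*(1-x))^j := by
    rw [hu]
    simp only
    rw [show j+1-1 = j from rfl, show 2*j+1-(j+1) = j by omega,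
      show 2*j+1+1-1 = 2*j+1 from rfl,
      Nat.choose_eq_zero_of_lt (show 2*j < 2*j+1 by omega), mul_pow]
    push_cast
    ring
  rw [hval] at hsum
  rw [hfun]
  exact hsum

lemma binTail_pos (j : ℕ) (x : ℝ) (hx0 : 0 < x) (hx1 : x < 1) : 0 < binTail (2*j+1) x := by
  rw [binTail]
  apply Finset.sum_pos'
  · intro i hi
    have h1 : (0:ℝ) < 1 - x := by linarith
    positivity
  · refine ⟨2*j+1, ?_, ?_⟩
    · simp only [mem_Icc]; omega
    · have h1 : (0:ℝ) < 1 - x := by linarith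
      have h2 : (0:ℝ) < ((2*j+1).choose (2*j+1) : ℝ) := by
        rw [Nat.choose_self]; norm_num
      positivity


set_option maxHeartbeats 2000000 in
theorem g_three_zeros_low_mutation (k : ℕ) (hk : Odd k) (hk3 : 3 ≤ k)
    (p : ℝ) (hp0 : 0 < p) (hpthr : p < 1 / 2 - 1 / (2 * alpha k))
    (g : ℝ → ℝ) (hg : ∀ t, g t = binTail k ((1 - 2 * p) * t + p) - t) :
    ∃ β₁ ∈ Set.Ioo (0 : ℝ) (1 / 2),
      ∀ t ∈ Set.Icc (0 : ℝ) 1,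
        (g t = 0 ↔ t = β₁ ∨ t = 1 / 2 ∨ t = 1 - β₁) := by
  obtain ⟨j, hjk⟩ := hk
  subst hjk
  have hj : 1 ≤ j := by omega
  set c : ℝ := (((2*j+1) * (2*j).choose j : ℕ) : ℝ) with hc
  have hcpos : 0 < c := by
    rw [hc]
    have := Nat.choose_pos (show j ≤ 2*j by omega)
    positivity
  have hA : alpha (2*j+1) = c / 2^(2*j) := alpha_eq j hj
  have hApos : 0 < alpha (2*j+1) := by rw [hA]; positivity
  have hp1 : p < 1/2 := by
    have : 0 < 1 / (2 * alpha (2*j+1)) := by positivity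
    linarith
  have h2p : 0 < 1 - 2*p := by linarith
  have hαp : 1 < (1 - 2*p) * alpha (2*j+1) := by
    have h1 : 1 / alpha (2*j+1) < 1 - 2*p := by
      have e : 1 / (2 * alpha (2*j+1)) = (1 / alpha (2*j+1))/2 := by
        rw [one_div, one_div, mul_inv]; ring
      linarith [hpthr, e ▸ hpthr]
    exact (div_lt_iff₀ hApos).mp h1
  -- the affine map
  set y : ℝ → ℝ := fun t => (1 - 2*p) * t + p with hy
  clear_value y
  -- derivative of g
  have hgd : ∀ t : ℝ, HasDerivAt g (c * (y t * (1 - y t))^j * (1 - 2*p) - 1) t := by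
    intro t
    have hfun : g = fun t => binTail (2*j+1) (y t) - t := by funext t; rw [hg t, hy]
    have hlin : HasDerivAt y (1 - 2*p) t := by
      rw [hy]
      simpa using ((hasDerivAt_id t).const_mul (1 - 2*p)).add_const p
    have hcomp := (binTail_hasDerivAt j (y t)).comp t hlin
    have := hcomp.sub (hasDerivAt_id t)
    rw [hfun]
    convert this using 1
    all_goals rfl
  have gdiff : ∀ t : ℝ, DifferentiableAt ℝ g t := fun t => (hgd t).differentiableAt
  have gcont : Continuous g := by
    rw [continuous_iff_continuousAt]; exact fun t => (gdiff t).continuousAt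
  -- antisymmetry
  have gsymm : ∀ t : ℝ, g (1 - t) = -(g t) := by
    intro t
    rw [hg, hg]
    have e : (1 - 2*p) * (1 - t) + p = 1 - ((1 - 2*p) * t + p) := by ring
    rw [e, binTail_symm j]
    ring
  have ghalf : g (1/2) = 0 := by
    have := gsymm (1/2)
    norm_num at this
    linarith
  have g0 : 0 < g 0 := by
    rw [hg]
    simp only [mul_zero, zero_add, sub_zero]
    exact binTail_pos j p hp0 (by linarith)
  have g1 : g 1 < 0 := by
    have := gsymm 0
    simp only [sub_zero] at this
    linarith
  -- strict convexity on [0,1/2]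
  have hmono : StrictMonoOn (deriv g) (interior (Set.Icc (0:ℝ) (1/2))) := by
    rw [interior_Icc]
    intro t1 ht1 t2 ht2 h12
    simp only [Set.mem_Ioo] at ht1 ht2
    rw [(hgd t1).deriv, (hgd t2).deriv]
    have hy12 : y t1 < y t2 := by
      simp only [hy]
      nlinarith [ht1.1, ht1.2, ht2.1, ht2.2]
    have hy1pos : 0 < y t1 := by simp only [hy]; nlinarith
    have hy2half : y t2 < 1/2 := by simp only [hy]; nlinarith
    have hy1half : y t1 < 1/2 := lt_trans hy12 hy2half
    have hw : y t1 * (1 - y t1) < y t2 * (1 - y t2) := by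
      nlinarith [mul_pos (sub_pos.mpr hy12) (show 0 < 1 - y t1 - y t2 by linarith)]
    have hwpos : 0 < y t1 * (1 - y t1) :=
      mul_pos hy1pos (by linarith)
    have hpow : (y t1 * (1 - y t1))^j < (y t2 * (1 - y t2))^j :=
      pow_lt_pow_left₀ hw (le_of_lt hwpos) (by omega)
    have : c * (y t1 * (1 - y t1))^j * (1-2*p) < c * (y t2 * (1 - y t2))^j * (1-2*p) := by
      apply mul_lt_mul_of_pos_right _ h2p
      exact mul_lt_mul_of_pos_left hpow hcpos
    linarith
  have scx : StrictConvexOn ℝ (Set.Icc (0:ℝ) (1/2)) g :=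
    StrictMonoOn.strictConvexOn_of_deriv (convex_Icc 0 (1/2)) gcont.continuousOn hmono
  -- derivative at 1/2 is positive
  have hyhalf : y (1/2) = 1/2 := by simp only [hy]; ring
  have hdhalf : 0 < c * (y (1/2) * (1 - y (1/2)))^j * (1-2*p) - 1 := by
    rw [hyhalf]
    have e : (1/2 * (1 - 1/2) : ℝ)^j = 1/2^(2*j) := by
      rw [show (1/2 * (1 - 1/2) : ℝ) = 1/4 by norm_num, div_pow, one_pow, pow_mul]
      norm_num
    rw [e]
    have : c * (1/2^(2*j)) * (1-2*p) = (1-2*p) * alpha (2*j+1) := by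
      rw [hA]; field_simp
    linarith [this ▸ hαp]
  -- a point just left of 1/2 where g is negative
  have hslope := hasDerivAt_iff_tendsto_slope.mp (hgd (1/2))
  have hev1 : ∀ᶠ s in nhdsWithin (1/2 : ℝ) (Set.Iio (1/2)), 0 < slope g (1/2) s := by
    have h1 : ∀ᶠ z in nhds (c * (y (1/2) * (1 - y (1/2)))^j * (1-2*p) - 1), 0 < z :=
      eventually_gt_nhds hdhalf
    exact (hslope.eventually h1).filter_mono
      (nhdsWithin_mono _ (fun s hs => ne_of_lt hs))
  have hev2 : ∀ᶠ s in nhdsWithin (1/2:ℝ) (Set.Iio (1/2)), s ∈ Set.Ioo (0:ℝ) (1/2) :=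
    Ioo_mem_nhdsLT_of_mem ⟨by norm_num, le_refl _⟩
  obtain ⟨s, hs1, hs2⟩ := (hev1.and hev2).exists
  have hgs : g s < 0 := by
    rw [slope_def_field] at hs1
    have hb : s - 1/2 < 0 := by linarith [hs2.2]
    rcases div_pos_iff.mp hs1 with ⟨h1, h2⟩ | ⟨h1, h2⟩
    · linarith
    · linarith [ghalf]
  -- existence of β₁ by IVT
  have hivt := intermediate_value_Ioo' (le_of_lt hs2.1) gcont.continuousOn
  obtain ⟨β₁, hβmem, hβ⟩ := hivt ⟨hgs, g0⟩
  have hβ0 : 0 < β₁ := hβmem.1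
  have hβhalf : β₁ < 1/2 := lt_trans hβmem.2 hs2.2
  -- strict convexity: between two zeros the function is negative
  have hneg : ∀ u v : ℝ, 0 ≤ u → u < v → v < 1/2 → g u = 0 → g v < 0 := by
    intro u v hu huv hv hgu
    have hu2 : u ∈ Set.Icc (0:ℝ) (1/2) := ⟨hu, by linarith⟩
    have hh2 : (1/2:ℝ) ∈ Set.Icc (0:ℝ) (1/2) := ⟨by norm_num, le_refl _⟩
    have hne : u ≠ 1/2 := by intro h; rw [h] at huv; linarith
    have hden : (0:ℝ) < 1/2 - u := by linarith
    have hapos : 0 < ((1/2:ℝ) - v) / (1/2 - u) := div_pos (by linarith) hden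
    have hbpos : 0 < (v - u) / (1/2 - u) := div_pos (by linarith) hden
    have hab : ((1/2:ℝ) - v) / (1/2 - u) + (v - u) / (1/2 - u) = 1 := by
      rw [← add_div, show (1/2:ℝ) - v + (v - u) = 1/2 - u by ring,
        div_self (ne_of_gt hden)]
    have key := scx.2 hu2 hh2 hne hapos hbpos hab
    have hcomb : (((1/2:ℝ) - v) / (1/2 - u)) • u + ((v - u) / (1/2 - u)) • (1/2:ℝ) = v := by
      simp only [smul_eq_mul]
      rw [div_mul_eq_mul_div, div_mul_eq_mul_div, ← add_div,
        div_eq_iff (ne_of_gt hden)]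
      ring
    rw [hcomb, hgu, ghalf] at key
    simpa using key
  have huniq : ∀ t ∈ Set.Ioo (0:ℝ) (1/2), g t = 0 → t = β₁ := by
    intro t ht hgt
    by_contra hne
    rcases lt_or_gt_of_ne hne with h | h
    · have := hneg t β₁ (le_of_lt ht.1) h hβhalf hgt
      linarith
    · have := hneg β₁ t (le_of_lt hβ0) h ht.2 hβ
      linarith
  refine ⟨β₁, ⟨hβ0, hβhalf⟩, ?_⟩
  intro t ht
  constructor
  · intro hgt
    rcases eq_or_lt_of_le ht.1 with h0 | h0
    · exfalso; rw [← h0] at hgt; linarith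
    rcases lt_trichotomy t (1/2) with h | h | h
    · exact Or.inl (huniq t ⟨h0, h⟩ hgt)
    · exact Or.inr (Or.inl h)
    · rcases eq_or_lt_of_le ht.2 with h1 | h1
      · exfalso; rw [h1] at hgt; linarith
      · refine Or.inr (Or.inr ?_)
        have h1t : (1:ℝ) - t ∈ Set.Ioo (0:ℝ) (1/2) := ⟨by linarith, by linarith⟩
        have hz : g (1 - t) = 0 := by rw [gsymm t, hgt, neg_zero]
        have := huniq (1-t) h1t hz
        linarith
  · rintro (h | h | h)
    · rw [h]; exact hβ
    · rw [h]; exact ghalf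
    · rw [h, gsymm β₁, hβ, neg_zero]
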